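/- Let U ⊆ F_q³ be a set of q² − 2 points that does not determine the points of C, with ∑_{u∈U} u = (0,0,0), and suppose the line at infinity l(y,z,w) meets C for the nonzero triple (y,z,w). Then σ_{2l+1}(y,z,w) = 0 for all integers l with 0 ≤ l ≤ (q² − 3)/2. -/

import Mathlib

/-- The dot product on `F³`. -/
def dot3 {F : Type*} [Field F] (u v : F × F × F) : F :=
  u.1 * v.1 + u.2.1 * v.2.1 + u.2.2 * v.2.2

/-- The nondegenerate quadratic form `Q(t₀,t₁,t₂) = t₁² − t₀t₂` defining the conic `C`. -/
def quadQ {F : Type*} [Field F] (t : F × F × F) : F :=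
  t.2.1 ^ 2 - t.1 * t.2.2

/-- `U` does not determine the points of the conic `C`:
`Q(u − u') ≠ 0` for all distinct `u, u' ∈ U`. -/
def NoDetermine {F : Type*} [Field F] (U : Finset (F × F × F)) : Prop :=
  ∀ u ∈ U, ∀ u' ∈ U, u ≠ u' → quadQ (u - u') ≠ 0

/-- The line at infinity `l(y,z,w)` meets the conic `C`. -/
def MeetsConic {F : Type*} [Field F] (v : F × F × F) : Prop :=
  ∃ t : F × F × F, t ≠ 0 ∧ quadQ t = 0 ∧ dot3 v t = 0

/-- `σ_i(y,z,w)`: the `i`-th elementary symmetric function of the multiset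
`{u·(y,z,w) : u ∈ U}`. -/
def sigmaU {F : Type*} [Field F] (U : Finset (F × F × F)) (v : F × F × F) (i : ℕ) : F :=
  (U.val.map (fun u => dot3 u v)).esymm i

/-!
Every fibre of `u ↦ u·v` on `U` has at most `q` points: the plane `u·v = c` contains the
direction `t` of a point of `C`, so it is a union of `q` lines parallel to `t`, and each of them
meets `U` at most once because `Q` vanishes on multiples of `t`. Since `|U| = q² − 2`, the
multiset `M = {u·v : u ∈ U}` is `q` copies of `F_q` minus two values `x, y`; both `M` and
`q·F_q` sum to `0`, so `y = −x`. Hence `M` is invariant under negation, and in odd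
characteristic its odd elementary symmetric functions vanish.
-/

open Finset

section Geometry

variable {F : Type*} [Field F]

def cross3 (x y : F × F × F) : F × F × F :=
  (x.2.1 * y.2.2 - x.2.2 * y.2.1, x.2.2 * y.1 - x.1 * y.2.2, x.1 * y.2.1 - x.2.1 * y.1)

lemma exists_eq_smul_of_cross3_eq_zero {x y : F × F × F} (hy : y ≠ 0) (h : cross3 x y = 0) :
    ∃ c : F, x = c • y := by
  obtain ⟨x0, x1, x2⟩ := x
  obtain ⟨y0, y1, y2⟩ := y
  obtain ⟨h1, h2, h3⟩ :
      x1 * y2 - x2 * y1 = 0 ∧ x2 * y0 - x0 * y2 = 0 ∧ x0 * y1 - x1 * y0 = 0 := by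
    simpa [cross3, Prod.ext_iff] using h
  have hy0 : y0 ≠ 0 ∨ y1 ≠ 0 ∨ y2 ≠ 0 := by
    by_contra! h0
    exact hy (by simp [h0])
  simp only [Prod.smul_mk, smul_eq_mul, Prod.mk.injEq]
  rcases hy0 with h0 | h0 | h0
  · refine ⟨x0 / y0, by field_simp, ?_, ?_⟩ <;> field_simp
    · linear_combination -h3
    · linear_combination h2
  · refine ⟨x1 / y1, ?_, by field_simp, ?_⟩ <;> field_simp
    · linear_combination h3
    · linear_combination -h1
  · refine ⟨x2 / y2, ?_, ?_, by field_simp⟩ <;> field_simp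
    · linear_combination -h2
    · linear_combination h1

lemma cross3_cross3_eq_zero {w a v : F × F × F} (hv : dot3 v w = 0) (ha : dot3 a w = 0) :
    cross3 w (cross3 a v) = 0 := by
  obtain ⟨w0, w1, w2⟩ := w
  obtain ⟨a0, a1, a2⟩ := a
  obtain ⟨v0, v1, v2⟩ := v
  simp only [dot3] at hv ha
  simp only [cross3, Prod.ext_iff, Prod.fst_zero, Prod.snd_zero]
  refine ⟨?_, ?_, ?_⟩
  · linear_combination a0 * hv - v0 * ha
  · linear_combination a1 * hv - v1 * ha
  · linear_combination a2 * hv - v2 * ha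

lemma quadQ_smul (c : F) (t : F × F × F) : quadQ (c • t) = c ^ 2 * quadQ t := by
  obtain ⟨t0, t1, t2⟩ := t
  simp only [quadQ, Prod.smul_mk, smul_eq_mul]
  ring

/-- As `a × v ≠ 0`, the common kernel of `a` and `v` is the line through `a × v`, so `w` is a
multiple of `t`. -/
lemma quadQ_eq_zero_of_dot3_eq_zero {v a t w : F × F × F} (hav : cross3 a v ≠ 0)
    (ht : t ≠ 0) (hQt : quadQ t = 0) (hvt : dot3 v t = 0) (hat : dot3 a t = 0)
    (hvw : dot3 v w = 0) (haw : dot3 a w = 0) : quadQ w = 0 := by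
  obtain ⟨cw, rfl⟩ := exists_eq_smul_of_cross3_eq_zero hav (cross3_cross3_eq_zero hvw haw)
  obtain ⟨ct, rfl⟩ := exists_eq_smul_of_cross3_eq_zero hav (cross3_cross3_eq_zero hvt hat)
  have hct : ct ≠ 0 := by
    rintro rfl
    exact ht (zero_smul F _)
  rw [quadQ_smul] at hQt ⊢
  rw [(mul_eq_zero.mp hQt).resolve_left (pow_ne_zero 2 hct), mul_zero]

lemma exists_dot3_eq_zero_cross3_ne_zero {t v : F × F × F} (ht : t ≠ 0) (hv : v ≠ 0) :
    ∃ a : F × F × F, dot3 a t = 0 ∧ cross3 a v ≠ 0 := by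
  by_contra! hcon
  obtain ⟨t0, t1, t2⟩ := t
  -- `t^⊥` is spanned by these three vectors; if all were multiples of `v`, then `t = 0`.
  obtain ⟨c0, hc0⟩ :=
    exists_eq_smul_of_cross3_eq_zero hv (hcon (0, t2, -t1) (by simp only [dot3]; ring))
  obtain ⟨c1, hc1⟩ :=
    exists_eq_smul_of_cross3_eq_zero hv (hcon (-t2, 0, t0) (by simp only [dot3]; ring))
  obtain ⟨c2, hc2⟩ :=
    exists_eq_smul_of_cross3_eq_zero hv (hcon (t1, -t0, 0) (by simp only [dot3]; ring))
  obtain ⟨v0, v1, v2⟩ := v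
  simp only [Prod.smul_mk, smul_eq_mul, Prod.mk.injEq] at hc0 hc1 hc2
  obtain ⟨hA, hB, hC⟩ := hc0
  obtain ⟨hD, hE, hF⟩ := hc1
  obtain ⟨hG, hH, hI⟩ := hc2
  have e0 : t0 * t0 = 0 := by linear_combination t0 * hF - (c1 * v2) * hH + (c2 * v2) * hE
  have e1 : t1 * t1 = 0 := by linear_combination t1 * hG - (c2 * v0) * hC + (c2 * v2) * hA
  have e2 : t2 * t2 = 0 := by linear_combination t2 * hB - (c0 * v1) * hD + (c1 * v1) * hA
  simp only [mul_self_eq_zero] at e0 e1 e2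
  exact ht (by simp [e0, e1, e2])

lemma card_filter_dot3_eq_le [Fintype F] [DecidableEq F] {U : Finset (F × F × F)}
    (hU : NoDetermine U) {v t : F × F × F} (hv : v ≠ 0) (ht : t ≠ 0) (hQt : quadQ t = 0)
    (hvt : dot3 v t = 0) (c : F) : #{u ∈ U | dot3 u v = c} ≤ Fintype.card F := by
  obtain ⟨a, hat, hav⟩ := exists_dot3_eq_zero_cross3_ne_zero ht hv
  refine (card_le_card_of_injOn (dot3 a) (fun _ _ => mem_univ _) ?_).trans_eq card_univ
  intro u hu u' hu' he
  simp only [coe_filter, Set.mem_ofPred_eq] at hu hu'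
  by_contra hne
  refine hU u hu.1 u' hu'.1 hne (quadQ_eq_zero_of_dot3_eq_zero hav ht hQt hvt hat ?_ ?_)
  · have hc := hu.2
    have hc' := hu'.2
    simp only [dot3, Prod.fst_sub, Prod.snd_sub] at hc hc' ⊢
    linear_combination hc - hc'
  · simp only [dot3, Prod.fst_sub, Prod.snd_sub] at he ⊢
    linear_combination he

lemma map_dot3_le_card_nsmul_univ [Fintype F] [DecidableEq F] {U : Finset (F × F × F)}
    (hU : NoDetermine U) {v : F × F × F} (hv : v ≠ 0) (hmeet : MeetsConic v) :
    U.val.map (dot3 · v) ≤ Fintype.card F • (univ : Finset F).val := by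
  obtain ⟨t, ht, hQt, hvt⟩ := hmeet
  refine Multiset.le_iff_count.mpr fun c => ?_
  rw [Multiset.count_nsmul, Multiset.count_univ, mul_one, Multiset.count_map]
  simp_rw [eq_comm (a := c)]
  exact card_filter_dot3_eq_le hU hv ht hQt hvt c

lemma sum_dot3 (U : Finset (F × F × F)) (v : F × F × F) :
    ∑ u ∈ U, dot3 u v = dot3 (∑ u ∈ U, u) v := by
  simp only [dot3, Prod.fst_sum, Prod.snd_sum, sum_add_distrib, sum_mul]

end Geometry

namespace Multiset

lemma map_neg_eq_self_of_card_eq_two {G : Type*} [AddCommGroup G] {D : Multiset G}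
    (hcard : card D = 2) (hsum : D.sum = 0) : D.map Neg.neg = D := by
  obtain ⟨x, y, rfl⟩ := card_eq_two.mp hcard
  obtain rfl : y = -x := eq_neg_of_add_eq_zero_right (by simpa using hsum)
  simpa using pair_comm (-x) x

lemma map_neg_eq_self_of_add_eq_nsmul_univ {G : Type*} [AddCommGroup G] [Fintype G]
    {M D : Multiset G} {n : ℕ} (h : M + D = n • (univ : Finset G).val)
    (hD : D.map Neg.neg = D) : M.map Neg.neg = M := by
  have huniv : (univ : Finset G).val.map Neg.neg = univ.val := map_univ_val_equiv (Equiv.neg G)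
  have := congrArg (map Neg.neg) h
  rw [map_add, hD, map_nsmul, huniv, ← h] at this
  exact add_right_cancel this

lemma map_neg_eq_self_of_le_card_nsmul_univ {F : Type*} [Field F] [Fintype F] [DecidableEq F]
    {M : Multiset F} (hle : M ≤ Fintype.card F • (univ : Finset F).val)
    (hcard : card M = Fintype.card F ^ 2 - 2) (hsum : M.sum = 0) : M.map Neg.neg = M := by
  have hMD := add_tsub_cancel_of_le hle
  have hq : 2 ^ 2 ≤ Fintype.card F ^ 2 := Nat.pow_le_pow_left Fintype.one_lt_card 2
  refine map_neg_eq_self_of_add_eq_nsmul_univ hMD (map_neg_eq_self_of_card_eq_two ?_ ?_)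
  · have := congrArg card hMD
    rw [card_add, card_nsmul, hcard, card_val, card_univ, ← sq] at this
    omega
  · have := congrArg sum hMD
    rwa [sum_add, hsum, zero_add, sum_nsmul, nsmul_eq_mul, FiniteField.cast_card_eq_zero,
      zero_mul] at this

lemma esymm_eq_zero_of_map_neg_eq_self {R : Type*} [CommRing R] [IsDomain R]
    (hR : ringChar R ≠ 2) {M : Multiset R} (hM : M.map Neg.neg = M) {k : ℕ} (hk : Odd k) :
    M.esymm k = 0 := by
  have h := pow_smul_esymm (-1 : R) k M
  simp only [neg_one_smul, hk.neg_one_pow, hM] at h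
  exact (Ring.eq_self_iff_eq_zero_of_char_ne_two hR).mp h

end Multiset

theorem stmt_3_general {p h : ℕ} (hodd : Odd p)
    {F : Type*} [Field F] [Fintype F] [DecidableEq F]
    (hcard : Fintype.card F = p ^ h)
    (U : Finset (F × F × F))
    (hUcard : U.card = Fintype.card F ^ 2 - 2)
    (hU : NoDetermine U)
    (hsum : ∑ u ∈ U, u = 0)
    (v : F × F × F) (hv : v ≠ 0) (hmeet : MeetsConic v) :
    ∀ l : ℕ, l ≤ (Fintype.card F ^ 2 - 3) / 2 → sigmaU U v (2 * l + 1) = 0 := by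
  intro l _
  have hchar : ringChar F ≠ 2 := by
    rw [Ne, FiniteField.even_card_iff_char_two, hcard, ← Nat.even_iff, Nat.not_even_iff_odd]
    exact hodd.pow
  have hMsum : (U.val.map (dot3 · v)).sum = 0 := by
    change ∑ u ∈ U, dot3 u v = 0
    rw [sum_dot3, hsum]
    simp [dot3]
  have hMneg := Multiset.map_neg_eq_self_of_le_card_nsmul_univ
    (map_dot3_le_card_nsmul_univ hU hv hmeet) (by simpa using hUcard) hMsum
  exact Multiset.esymm_eq_zero_of_map_neg_eq_self hchar hMneg (odd_two_mul_add_one l)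

theorem stmt_3 {p h : ℕ} (hp : p.Prime) (hodd : Odd p) (hh : 1 ≤ h)
    {F : Type*} [Field F] [Fintype F] [DecidableEq F]
    (hcard : Fintype.card F = p ^ h)
    (U : Finset (F × F × F))
    (hUcard : U.card = Fintype.card F ^ 2 - 2)
    (hU : NoDetermine U)
    (hsum : ∑ u ∈ U, u = 0)
    (v : F × F × F) (hv : v ≠ 0) (hmeet : MeetsConic v) :
    ∀ l : ℕ, l ≤ (Fintype.card F ^ 2 - 3) / 2 → sigmaU U v (2 * l + 1) = 0 :=
  stmt_3_general hodd hcard U hUcard hU hsum v hv hmeet
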